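/- arXiv:2305.16118 — 2 statements merged into one kernel-verified Lean document; each statement's English description precedes it below -/
import Mathlib

section
/- Let G = (S, M_e, M_s, ρ) be a game structure, let d ⊆ S be a set of target states, and let (base, step, conc) be a semantic acceleration lemma over S such that base ⊆ d and such that for every s ∈ conc with s ∉ d we have s ∈ Attr_Env(d ∪ {s' ∈ S | (s, s') ∈ step}). Then conc ⊆ Attr_Env(d). -/
/-!
Call `a'` a descendant of `a` if `a ∈ conc \ base` and `(a, a') ∈ step`. Condition (i) makes
descendance well-founded and (ii) keeps descendants inside `conc`, so we may argue by
well-founded induction. For `a ∈ conc \ d`, the environment can force the play into `d` or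
into a `step`-successor of `a`; such a successor is a descendant of `a` (as `base ⊆ d`), hence
lies in `Attr_Env(d)` by induction. Attractors compose — play towards `X` and, on entering `X`,
switch to the strategy of the entry state — so `Attr_Env(Attr_Env(d)) ⊆ Attr_Env(d)`.
-/

/-- A two-player game structure: states `S`, environment moves `Me`, system moves `Ms`,
and a transition relation such that every state has a successor and the two players'
moves uniquely determine the successor. -/
structure GameStructure (S : Type*) (Me : Type*) (Ms : Type*) where
  rel : S → Me → Ms → S → Prop
  exists_succ : ∀ s : S, ∃ (me : Me) (ms : Ms) (s' : S), rel s me ms s'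
  deterministic : ∀ (s : S) (me : Me) (ms : Ms) (s₁ s₂ : S),
    rel s me ms s₁ → rel s me ms s₂ → s₁ = s₂

variable {S Me Ms : Type*}

/-- The environment moves enabled in a state. -/
def enabledE (G : GameStructure S Me Ms) (s : S) : Set Me :=
  {me | ∃ (ms : Ms) (s' : S), G.rel s me ms s'}

/-- The system moves enabled in a state after a given environment move. -/
def enabledS (G : GameStructure S Me Ms) (s : S) (me : Me) : Set Ms :=
  {ms | ∃ s' : S, G.rel s me ms s'}

/-- A strategy for the system player: it maps a nonempty finite sequence of states,
given as the pair of its strict prefix `h = (s₀, …, s_{n-1})` and its last state `s = sₙ`,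
together with an environment move, to a system move; on enabled environment moves it
must choose an enabled system move. -/
structure SysStrategy (G : GameStructure S Me Ms) where
  act : List S → S → Me → Ms
  act_enabled : ∀ (h : List S) (s : S) (me : Me),
    me ∈ enabledE G s → act h s me ∈ enabledS G s me

/-- A strategy for the environment player: it maps a nonempty finite sequence of states,
given as the pair of its strict prefix `h = (s₀, …, s_{n-1})` and its last state `s = sₙ`,
to an enabled environment move. -/
structure EnvStrategy (G : GameStructure S Me Ms) where
  act : List S → S → Me
  act_enabled : ∀ (h : List S) (s : S), act h s ∈ enabledE G s

/-- `π` is a play consistent with the system strategy `σ`: at every step `n` there is an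
enabled environment move `me` such that the transition from `π n` under `me` and the
move chosen by `σ` on the history `(π 0, …, π n)` leads to `π (n+1)`. -/
def SysPlay (G : GameStructure S Me Ms) (σ : SysStrategy G) (π : ℕ → S) : Prop :=
  ∀ n : ℕ, ∃ me ∈ enabledE G (π n),
    G.rel (π n) me (σ.act ((List.range n).map π) (π n) me) (π (n + 1))

/-- `π` is a play consistent with the environment strategy `σ`: at every step `n` there
is a system move `ms` enabled after the environment move chosen by `σ` on the history
`(π 0, …, π n)` such that the corresponding transition leads to `π (n+1)`. -/
def EnvPlay (G : GameStructure S Me Ms) (σ : EnvStrategy G) (π : ℕ → S) : Prop :=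
  ∀ n : ℕ, ∃ ms ∈ enabledS G (π n) (σ.act ((List.range n).map π) (π n)),
    G.rel (π n) (σ.act ((List.range n).map π) (π n)) ms (π (n + 1))

/-- The system attractor of `T`: states from which the system has a strategy forcing
every consistent play to visit `T`. -/
def attrSys (G : GameStructure S Me Ms) (T : Set S) : Set S :=
  {s | ∃ σ : SysStrategy G, ∀ π : ℕ → S, π 0 = s → SysPlay G σ π → ∃ n : ℕ, π n ∈ T}

/-- The environment attractor of `T`: states from which the environment has a strategy
forcing every consistent play to visit `T`. -/
def attrEnv (G : GameStructure S Me Ms) (T : Set S) : Set S :=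
  {s | ∃ σ : EnvStrategy G, ∀ π : ℕ → S, π 0 = s → EnvPlay G σ π → ∃ n : ℕ, π n ∈ T}

/-- The controllable predecessor operator for the system player. -/
def cpreSys (G : GameStructure S Me Ms) (X : Set S) : Set S :=
  {s | ∀ me ∈ enabledE G s, ∃ ms ∈ enabledS G s me, ∀ s' : S, G.rel s me ms s' → s' ∈ X}

/-- The controllable predecessor operator for the environment player. -/
def cpreEnv (G : GameStructure S Me Ms) (X : Set S) : Set S :=
  {s | ∃ me ∈ enabledE G s, ∀ ms ∈ enabledS G s me, ∀ s' : S, G.rel s me ms s' → s' ∈ X}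

/-- A semantic acceleration lemma over a type `A`: a triple `(base, step, conc)` of
subsets such that (i) every infinite `step`-sequence starting in `conc` eventually
reaches `base`, and (ii) `conc \ base` is closed under `step`-successors. -/
def IsAccelLemma {A : Type*} (base : Set A) (step : Set (A × A)) (conc : Set A) : Prop :=
  (∀ α : ℕ → A, α 0 ∈ conc → (∀ i : ℕ, (α i, α (i + 1)) ∈ step) → ∃ k : ℕ, α k ∈ base) ∧
  (∀ a ∈ conc, a ∉ base → ∀ a' : A, (a, a') ∈ step → a' ∈ conc)

theorem IsAccelLemma.wellFounded {A : Type*} {base conc : Set A} {step : Set (A × A)}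
    (h : IsAccelLemma base step conc) :
    WellFounded fun a' a => a ∈ conc ∧ a ∉ base ∧ (a, a') ∈ step := by
  refine wellFounded_iff_isEmpty_descending_chain.2 ⟨fun ⟨f, hf⟩ => ?_⟩
  obtain ⟨k, hk⟩ := h.1 f (hf 0).1 fun i => (hf i).2.2
  exact (hf k).2.1 hk

theorem List.map_range_append_singleton {α : Type*} (f : ℕ → α) (n : ℕ) :
    (List.range n).map f ++ [f n] = (List.range (n + 1)).map f := by
  simp [List.range_succ]

namespace EnvStrategy

variable {G : GameStructure S Me Ms}

noncomputable instance : Inhabited (EnvStrategy G) :=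
  ⟨⟨fun _ s => (G.exists_succ s).choose, fun _ s => (G.exists_succ s).choose_spec⟩⟩

open Classical in
/-- Play `σ` until the play enters `X`, at some state `x`; from then on play `τ x` as if the
play had started at `x`, i.e. on the history truncated to the part from `x` on. -/
noncomputable def switchOn (σ : EnvStrategy G) (X : Set S) (τ : S → EnvStrategy G) :
    EnvStrategy G where
  act h s :=
    let i := (h ++ [s]).findIdx (· ∈ X)
    if hi : i < (h ++ [s]).length then (τ (h ++ [s])[i]).act (h.drop i) s else σ.act h s
  act_enabled h s := by
    dsimp only
    split
    · apply act_enabled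
    · apply act_enabled

variable {σ : EnvStrategy G} {X : Set S} {τ : S → EnvStrategy G} {π : ℕ → S}

theorem switchOn_act_of_forall_notMem {n : ℕ} (h : ∀ k ≤ n, π k ∉ X) :
    (σ.switchOn X τ).act ((List.range n).map π) (π n) =
      σ.act ((List.range n).map π) (π n) := by
  simp only [switchOn, List.map_range_append_singleton]
  rw [dif_neg]
  simpa [List.findIdx_eq_length, Nat.lt_succ_iff] using h

theorem switchOn_act_add {m : ℕ} (hm : π m ∈ X) (hfirst : ∀ k < m, π k ∉ X) (k : ℕ) :
    (σ.switchOn X τ).act ((List.range (m + k)).map π) (π (m + k)) =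
      (τ (π m)).act ((List.range k).map fun j => π (m + j)) (π (m + k)) := by
  classical
  have hidx : ((List.range (m + k + 1)).map π).findIdx (· ∈ X) = m := by
    rw [List.findIdx_eq (by simp)]
    simpa using ⟨hm, hfirst⟩
  have hdrop : ((List.range (m + k)).map π).drop m = (List.range k).map fun j => π (m + j) := by
    rw [List.range_add, List.map_append, List.drop_left' (by simp), List.map_map]
    rfl
  simp only [switchOn, List.map_range_append_singleton, hidx]
  rw [dif_pos (by simp), hdrop]
  simp

theorem envPlay_of_switchOn_of_forall_notMem (hπ : EnvPlay G (σ.switchOn X τ) π)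
    (h : ∀ n, π n ∉ X) : EnvPlay G σ π := fun n => by
  simpa only [switchOn_act_of_forall_notMem fun k _ => h k] using hπ n

theorem envPlay_shift_of_switchOn (hπ : EnvPlay G (σ.switchOn X τ) π) {m : ℕ}
    (hm : π m ∈ X) (hfirst : ∀ k < m, π k ∉ X) :
    EnvPlay G (τ (π m)) fun k => π (m + k) := fun k => by
  have hπk := hπ (m + k)
  rw [switchOn_act_add hm hfirst] at hπk
  exact hπk

end EnvStrategy

theorem subset_attrEnv (G : GameStructure S Me Ms) (T : Set S) : T ⊆ attrEnv G T :=
  fun _ hs => ⟨default, fun _ h0 _ => ⟨0, h0 ▸ hs⟩⟩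

theorem attrEnv_subset_of_subset_attrEnv {G : GameStructure S Me Ms} {X T : Set S}
    (hX : X ⊆ attrEnv G T) : attrEnv G X ⊆ attrEnv G T := by
  classical
  rintro s ⟨σ, hσ⟩
  have hchoice : ∀ x, ∃ τ : EnvStrategy G,
      x ∈ X → ∀ π : ℕ → S, π 0 = x → EnvPlay G τ π → ∃ n, π n ∈ T := by
    intro x
    by_cases hx : x ∈ X
    · obtain ⟨τ, hτ⟩ := hX hx
      exact ⟨τ, fun _ => hτ⟩
    · exact ⟨default, fun h => absurd h hx⟩
  choose τ hτ using hchoice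
  refine ⟨σ.switchOn X τ, fun π h0 hπ => ?_⟩
  by_cases henter : ∃ n, π n ∈ X
  · have hshift := EnvStrategy.envPlay_shift_of_switchOn hπ (Nat.find_spec henter)
      fun _ => Nat.find_min henter
    obtain ⟨n, hn⟩ := hτ _ (Nat.find_spec henter) _ rfl hshift
    exact ⟨_, hn⟩
  · simp only [not_exists] at henter
    obtain ⟨n, hn⟩ := hσ π h0 (EnvStrategy.envPlay_of_switchOn_of_forall_notMem hπ henter)
    exact absurd hn (henter n)

/-- Lemma 6.3 (soundness of attractor acceleration, environment player): if
`(base, step, conc)` is a semantic acceleration lemma over the states with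
`base ⊆ d`, and from every state `s ∈ conc \ d` the environment can enforce reaching
`d` or a `step`-successor of `s`, then `conc ⊆ Attr_Env(d)`. -/
theorem accel_subset_attrEnv (G : GameStructure S Me Ms) (d : Set S)
    (base conc : Set S) (step : Set (S × S))
    (hlem : IsAccelLemma base step conc)
    (hbase : base ⊆ d)
    (hstep : ∀ s ∈ conc, s ∉ d → s ∈ attrEnv G (d ∪ {s' : S | (s, s') ∈ step})) :
    conc ⊆ attrEnv G d := by
  intro a ha
  induction a using hlem.wellFounded.induction with
  | h a ih =>
    by_cases had : a ∈ d
    · exact subset_attrEnv G d had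
    have hab : a ∉ base := fun h => had (hbase h)
    refine attrEnv_subset_of_subset_attrEnv ?_ (hstep a ha had)
    refine Set.union_subset (subset_attrEnv G d) fun a' ha' => ?_
    exact ih a' ⟨ha, hab, ha'⟩ (hlem.2 a ha hab a' ha')
end

section
/- Let G = (S, M_e, M_s, ρ) be a game structure and d ⊆ S. Define a : ℕ → 𝒫(S) by a(1) = d and a(n+1) = a(n) ∪ CPre_Sys(a(n)) for n ≥ 1. If a(N+1) = a(N) for some N ≥ 1, then a(N) = Attr_Sys(d). -/
variable {S Me Ms : Type*}

/-! The attractor is the least set `X` containing `d` with `CPre_Sys(X) ⊆ X`. It is such a set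
because a state in `CPre_Sys(Attr)` is won by one good move followed by a winning strategy of
the state reached. It is the least one because from outside such an `X` the environment can always
answer the system's move so as to stay outside `X`, which yields a consistent play never
visiting `d`. The iterates `a n` lie in the attractor by induction, and a fixed point `a N` is
such a set `X`. -/

theorem exists_seq_forall_history {α : Type*} {P : α → Prop} {R : List α → α → α → Prop}
    (hnext : ∀ l t, P t → ∃ t', P t' ∧ R l t t') {s : α} (hs : P s) :
    ∃ π : ℕ → α, π 0 = s ∧ ∀ n, P (π n) ∧ R ((List.range n).map π) (π n) (π (n + 1)) := by
  choose nxt hnxtP hnxtR using hnext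
  let step : List α × Subtype P → List α × Subtype P := fun q =>
    (q.1 ++ [q.2.1], ⟨nxt q.1 q.2.1 q.2.2, hnxtP _ _ q.2.2⟩)
  let p : ℕ → List α × Subtype P := fun n => step^[n] ([], ⟨s, hs⟩)
  have hp_succ : ∀ n, p (n + 1) = step (p n) := fun n => Function.iterate_succ_apply' _ _ _
  have hhist : ∀ n, (p n).1 = (List.range n).map (fun k => (p k).2.1) := by
    intro n
    induction n with
    | zero => rfl
    | succ n ih => rw [hp_succ, List.range_succ, List.map_append, ← ih]; rfl
  refine ⟨fun n => (p n).2.1, rfl, fun n => ⟨(p n).2.2, ?_⟩⟩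
  rw [← hhist]
  show R (p n).1 (p n).2.1 (p (n + 1)).2.1
  rw [hp_succ]
  exact hnxtR _ _ _

variable {G : GameStructure S Me Ms}

theorem cpreSys_mono {X Y : Set S} (hXY : X ⊆ Y) : cpreSys G X ⊆ cpreSys G Y := by
  intro s hs me hme
  obtain ⟨ms, hms, hX⟩ := hs me hme
  exact ⟨ms, hms, fun s' hs' => hXY (hX s' hs')⟩

/-- Determinism is what lets a single environment move defeat every system answer. -/
theorem exists_escape_of_not_mem_cpreSys {X : Set S} {s : S} (hs : s ∉ cpreSys G X) :
    ∃ me ∈ enabledE G s, ∀ ms s', G.rel s me ms s' → s' ∉ X := by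
  by_contra! hstay
  refine hs fun me hme => ?_
  obtain ⟨ms, s', hrel, hs'⟩ := hstay me hme
  exact ⟨ms, ⟨s', hrel⟩, fun s'' hrel'' => G.deterministic s me ms s' s'' hrel hrel'' ▸ hs'⟩

open Classical in
/-- The memoryless strategy that moves into `X` whenever the current state lies in
`CPre_Sys(X)`; elsewhere it plays some enabled move. -/
noncomputable def cpreStrategy (G : GameStructure S Me Ms) (X : Set S) : SysStrategy G where
  act _ t me :=
    if h : t ∈ cpreSys G X ∧ me ∈ enabledE G t then Classical.choose (h.1 me h.2)
    else if h' : me ∈ enabledE G t then Classical.choose (h' : ∃ ms s', G.rel t me ms s')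
    else Classical.choose (G.exists_succ t).choose_spec
  act_enabled _ t me hme := by
    by_cases h : t ∈ cpreSys G X ∧ me ∈ enabledE G t
    · simp only [dif_pos h]
      exact (Classical.choose_spec (h.1 me h.2)).1
    · simp only [dif_neg h, dif_pos hme]
      exact Classical.choose_spec (hme : ∃ ms s', G.rel t me ms s')

theorem cpreStrategy_rel_mem {X : Set S} {t s' : S} {me : Me} (h : List S)
    (ht : t ∈ cpreSys G X) (hme : me ∈ enabledE G t)
    (hrel : G.rel t me ((cpreStrategy G X).act h t me) s') : s' ∈ X := by
  have hc : t ∈ cpreSys G X ∧ me ∈ enabledE G t := ⟨ht, hme⟩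
  simp only [cpreStrategy, dif_pos hc] at hrel
  exact (Classical.choose_spec (ht me hme)).2 s' hrel

/-- Play `τ` for the first move, then, from the state `s'` reached, play `σ s'` as if the game
had started in `s'`. -/
def SysStrategy.andThen (τ : SysStrategy G) (σ : S → SysStrategy G) : SysStrategy G where
  act h t me := match h with
    | [] => τ.act [] t me
    | _ :: h' => (σ (h'.headD t)).act h' t me
  act_enabled h t me hme := by
    cases h with
    | nil => exact τ.act_enabled [] t me hme
    | cons _ h' => exact (σ (h'.headD t)).act_enabled h' t me hme

theorem sysPlay_andThen_tail {τ : SysStrategy G} {σ : S → SysStrategy G} {π : ℕ → S}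
    (hπ : SysPlay G (τ.andThen σ) π) : SysPlay G (σ (π 1)) (fun n => π (n + 1)) := by
  intro n
  have hhead : ((List.range n).map (fun k => π (k + 1))).headD (π (n + 1)) = π 1 := by
    cases n <;> simp [List.range_succ_eq_map]
  obtain ⟨me, hme, hrel⟩ := hπ (n + 1)
  rw [List.range_succ_eq_map, List.map_cons, List.map_map] at hrel
  refine ⟨me, hme, ?_⟩
  simpa only [SysStrategy.andThen, Function.comp_def, hhead] using hrel

theorem subset_attrSys (T : Set S) : T ⊆ attrSys G T :=
  fun _ hs => ⟨cpreStrategy G ∅, fun _ h0 _ => ⟨0, h0 ▸ hs⟩⟩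

theorem cpreSys_attrSys_subset (T : Set S) : cpreSys G (attrSys G T) ⊆ attrSys G T := by
  intro s hs
  have hwin : ∀ s', ∃ σ : SysStrategy G, s' ∈ attrSys G T →
      ∀ π : ℕ → S, π 0 = s' → SysPlay G σ π → ∃ n, π n ∈ T := by
    intro s'
    by_cases hs' : s' ∈ attrSys G T
    · obtain ⟨σ, hσ⟩ := hs'
      exact ⟨σ, fun _ => hσ⟩
    · exact ⟨cpreStrategy G ∅, fun h => absurd h hs'⟩
  choose σ hσ using hwin
  refine ⟨(cpreStrategy G (attrSys G T)).andThen σ, fun π h0 hπ => ?_⟩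
  obtain ⟨me, hme, hrel⟩ := hπ 0
  rw [h0] at hme hrel
  have h1 : π 1 ∈ attrSys G T := cpreStrategy_rel_mem [] hs hme hrel
  obtain ⟨n, hn⟩ := hσ (π 1) h1 (fun n => π (n + 1)) rfl (sysPlay_andThen_tail hπ)
  exact ⟨n + 1, hn⟩

theorem attrSys_subset_of_cpreSys_subset {T X : Set S} (hTX : T ⊆ X)
    (hX : cpreSys G X ⊆ X) : attrSys G T ⊆ X := by
  intro s ⟨σ, hσ⟩
  by_contra hs
  have hnext : ∀ l t, t ∉ X →
      ∃ t', t' ∉ X ∧ ∃ me ∈ enabledE G t, G.rel t me (σ.act l t me) t' := by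
    intro l t ht
    obtain ⟨me, hme, hescape⟩ := exists_escape_of_not_mem_cpreSys (fun h => ht (hX h))
    obtain ⟨t', hrel⟩ := σ.act_enabled l t me hme
    exact ⟨t', hescape _ t' hrel, me, hme, hrel⟩
  obtain ⟨π, h0, hπ⟩ := exists_seq_forall_history hnext hs
  obtain ⟨n, hn⟩ := hσ π h0 (fun n => (hπ n).2)
  exact (hπ n).1 (hTX hn)

/-- Proposition 5.1 (correctness of the symbolic attractor computation, system player):
if the iteration `a 1 = d`, `a (n+1) = a n ∪ CPre_Sys(a n)` stabilizes at step `N ≥ 1`,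
then `a N` is exactly the system attractor of `d`. -/
theorem attractor_iteration_sound_sys (G : GameStructure S Me Ms) (d : Set S)
    (a : ℕ → Set S)
    (h1 : a 1 = d)
    (hstep : ∀ n : ℕ, 1 ≤ n → a (n + 1) = a n ∪ cpreSys G (a n))
    (N : ℕ) (hN : 1 ≤ N) (hfix : a (N + 1) = a N) :
    a N = attrSys G d := by
  have hsound : ∀ n, 1 ≤ n → a n ⊆ attrSys G d := by
    intro n hn
    induction n, hn using Nat.le_induction with
    | base => exact h1 ▸ subset_attrSys d
    | succ n hn ih =>
      rw [hstep n hn]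
      exact Set.union_subset ih ((cpreSys_mono ih).trans (cpreSys_attrSys_subset d))
  have hd : ∀ n, 1 ≤ n → d ⊆ a n := by
    intro n hn
    induction n, hn using Nat.le_induction with
    | base => exact h1.ge
    | succ n hn ih => exact (hstep n hn).symm ▸ ih.trans Set.subset_union_left
  have hclosed : cpreSys G (a N) ⊆ a N :=
    calc cpreSys G (a N) ⊆ a N ∪ cpreSys G (a N) := Set.subset_union_right
      _ = a N := by rw [← hstep N hN, hfix]
  exact (hsound N hN).antisymm (attrSys_subset_of_cpreSys_subset (hd N hN) hclosed)
end
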